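/- Let G be a strongly connected signed digraph with mirror Laplacian L̂ = (W·L + Lᵀ·W)/2. Then G is structurally balanced if and only if there exists a gauge transformation D with every entry of D·A·D nonnegative such that the null space of L̂ equals span{D·1_n}, where 1_n is the all-ones vector in ℝⁿ. -/

import Mathlib

open Matrix BigOperators Filter

/-- In-degree of node `i`: sum of absolute values of the `i`-th row of `A`. -/
noncomputable def inDeg {n : ℕ} (A : Matrix (Fin n) (Fin n) ℝ) (i : Fin n) : ℝ := ∑ j, |A i j|

/-- Laplacian `L = Δ − A` of the signed digraph with adjacency matrix `A`. -/
noncomputable def lapOf {n : ℕ} (A : Matrix (Fin n) (Fin n) ℝ) : Matrix (Fin n) (Fin n) ℝ :=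
  Matrix.diagonal (inDeg A) - A

/-- Laplacian `L̄ = Δ − Ā` of the induced unsigned digraph. -/
noncomputable def lapBar {n : ℕ} (A : Matrix (Fin n) (Fin n) ℝ) : Matrix (Fin n) (Fin n) ℝ :=
  Matrix.diagonal (inDeg A) - Matrix.of (fun i j => |A i j|)

/-- `det(L̄_ii)`: determinant of `L̄` with its `i`-th row and column removed. -/
noncomputable def minorDet {n : ℕ} (A : Matrix (Fin n) (Fin n) ℝ) (i : Fin n) : ℝ :=
  Matrix.det ((lapBar A).submatrix (fun k : {j : Fin n // j ≠ i} => (k : Fin n))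
    (fun k : {j : Fin n // j ≠ i} => (k : Fin n)))

/-- `W = diag(det(L̄_11), …, det(L̄_nn))`. -/
noncomputable def Wmat {n : ℕ} (A : Matrix (Fin n) (Fin n) ℝ) : Matrix (Fin n) (Fin n) ℝ :=
  Matrix.diagonal (minorDet A)

/-- Mirror adjacency matrix `Â = (W·A + Aᵀ·W)/2`. -/
noncomputable def mirrorAdj {n : ℕ} (A : Matrix (Fin n) (Fin n) ℝ) : Matrix (Fin n) (Fin n) ℝ :=
  (1/2 : ℝ) • (Wmat A * A + Aᵀ * Wmat A)

/-- Mirror Laplacian `L̂ = (W·L + Lᵀ·W)/2`. -/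
noncomputable def mirrorLap {n : ℕ} (A : Matrix (Fin n) (Fin n) ℝ) : Matrix (Fin n) (Fin n) ℝ :=
  (1/2 : ℝ) • (Wmat A * lapOf A + (lapOf A)ᵀ * Wmat A)

/-- `(j, i)` is a directed edge when `a_ij ≠ 0`; strong connectivity: a directed
path between every ordered pair of distinct nodes. -/
def StronglyConnected {n : ℕ} (A : Matrix (Fin n) (Fin n) ℝ) : Prop :=
  ∀ i j : Fin n, i ≠ j → Relation.TransGen (fun u v => A v u ≠ 0) i j

/-- `σ` is the diagonal of a gauge transformation: each entry is `±1`. -/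
def IsGauge {n : ℕ} (σ : Fin n → ℝ) : Prop := ∀ i, σ i = 1 ∨ σ i = -1

/-- Structural balance: there is a gauge transformation `D = diag σ` with all entries
of `D·A·D` (entrywise `σ i * A i j * σ j`) nonnegative. -/
def StructBalanced {n : ℕ} (A : Matrix (Fin n) (Fin n) ℝ) : Prop :=
  ∃ σ : Fin n → ℝ, IsGauge σ ∧ ∀ i j, 0 ≤ σ i * A i j * σ j

/-- Improved Laplacian potential function
`Φ_e(x) = Σ_i Σ_j det(L̄_ii)·|a_ij|·(x_i − sgn(a_ij)·x_j)²`. -/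
noncomputable def PhiE {n : ℕ} (A : Matrix (Fin n) (Fin n) ℝ) (x : Fin n → ℝ) : ℝ :=
  ∑ i, ∑ j, minorDet A i * |A i j| * (x i - Real.sign (A i j) * x j) ^ 2

/-!
Conjugating by a balancing gauge `D = diag σ` turns `A` into the nonnegative matrix `DAD = |A|`
and `L̂` into `D L̂ D`, so it suffices to show that the kernel of `L̂` is spanned by `1` when `A`
is nonnegative and strongly connected. A maximum principle shows that the kernel of `L = Δ - A` consists of the constant
vectors and that `sI + L_ii` is nonsingular for every `s ≥ 0`; as `det (sI + L_ii)` tends to `+∞`,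
it follows that `det L_ii > 0`. The columns of `adj L` lie in `ker L`, so the diagonal
`w_i = det L_ii` of `adj L` is a left null vector of `L`. Hence `L̂` has zero row sums: it is
the Laplacian of the nonnegative, strongly connected matrix `Â = (WA + AᵀW)/2`, whose kernel
is again the constants.
-/

theorem Matrix.det_pos_of_det_smul_one_add_ne_zero {ι : Type*} [Fintype ι] [DecidableEq ι]
    (M : Matrix ι ι ℝ) (h : ∀ s : ℝ, 0 ≤ s → (s • (1 : Matrix ι ι ℝ) + M).det ≠ 0) :
    0 < M.det := by
  rcases isEmpty_or_nonempty ι with hι | hι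
  · simp
  set f : ℝ → ℝ := fun s => (s • (1 : Matrix ι ι ℝ) + M).det with hf
  have hcharpoly : ∀ s, (-M).charpoly.eval s = f s := fun s => by
    rw [eval_charpoly, scalar_apply, ← smul_one_eq_diagonal, sub_neg_eq_add]
  have htends : Tendsto f atTop atTop := by
    refine (Polynomial.tendsto_atTop_of_leadingCoeff_nonneg _ ?_ ?_).congr hcharpoly
    · rw [← Polynomial.natDegree_pos_iff_degree_pos, charpoly_natDegree_eq_dim]
      exact Fintype.card_pos
    · rw [(charpoly_monic _).leadingCoeff]
      exact zero_le_one
  obtain ⟨s, hs_pos, hs⟩ := ((htends.eventually_gt_atTop 0).and (eventually_ge_atTop 0)).exists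
  have hcont : Continuous f := by fun_prop
  by_contra! hM
  have hf0 : f 0 ≤ 0 := by simpa [hf] using hM
  obtain ⟨t, ht, hft⟩ := intermediate_value_Icc hs hcont.continuousOn ⟨hf0, hs_pos.le⟩
  exact h t ht.1 hft

theorem Matrix.adjugate_apply_self {R : Type*} [CommRing R] {n : ℕ}
    (M : Matrix (Fin n) (Fin n) R) (i : Fin n) :
    M.adjugate i i = (M.submatrix ((↑) : {j // j ≠ i} → Fin n) (↑)).det := by
  obtain ⟨m, rfl⟩ : ∃ m, n = m + 1 := Nat.exists_eq_add_one_of_ne_zero i.pos.ne'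
  rw [adjugate_fin_succ_eq_det_submatrix, ← det_submatrix_equiv_self (finSuccAboveEquiv i),
    submatrix_submatrix, (Even.add_self (i : ℕ)).neg_one_pow, one_mul]
  rfl

section Laplacian

variable {n : ℕ} {B : Matrix (Fin n) (Fin n) ℝ}

theorem lapOf_mulVec_apply (B : Matrix (Fin n) (Fin n) ℝ) (x : Fin n → ℝ) (u : Fin n) :
    (lapOf B *ᵥ x) u = inDeg B u * x u - ∑ j, B u j * x j := by
  simp only [lapOf, sub_mulVec, Pi.sub_apply, mulVec_diagonal]
  rfl

theorem inDeg_of_nonneg (hB : ∀ i j, 0 ≤ B i j) (u : Fin n) : inDeg B u = ∑ j, B u j :=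
  Finset.sum_congr rfl fun j _ => abs_of_nonneg (hB u j)

theorem lapBar_of_nonneg (hB : ∀ i j, 0 ≤ B i j) : lapBar B = lapOf B := by
  simp only [lapBar, lapOf, abs_of_nonneg (hB _ _)]
  rfl

theorem lapOf_mulVec_apply_of_nonneg (hB : ∀ i j, 0 ≤ B i j) (x : Fin n → ℝ) (u : Fin n) :
    (lapOf B *ᵥ x) u = ∑ j, B u j * (x u - x j) := by
  simp only [lapOf_mulVec_apply, inDeg_of_nonneg hB, mul_sub, Finset.sum_sub_distrib,
    Finset.sum_mul]

theorem eq_of_forall_le_of_lapOf_mulVec_nonpos (hB : ∀ i j, 0 ≤ B i j) {x : Fin n → ℝ}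
    {u : Fin n} (hmax : ∀ l, x l ≤ x u) (hu : (lapOf B *ᵥ x) u ≤ 0) {l : Fin n}
    (hl : B u l ≠ 0) : x l = x u := by
  have hterm : ∀ j ∈ Finset.univ, 0 ≤ B u j * (x u - x j) :=
    fun j _ => mul_nonneg (hB u j) (sub_nonneg.mpr (hmax j))
  rw [lapOf_mulVec_apply_of_nonneg hB] at hu
  have hzero := (Finset.sum_eq_zero_iff_of_nonneg hterm).mp
    (hu.antisymm (Finset.sum_nonneg hterm)) l (Finset.mem_univ l)
  linarith [(mul_eq_zero.mp hzero).resolve_left hl]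

theorem StronglyConnected.forall_of_closed (hsc : StronglyConnected B) {P : Fin n → Prop}
    (hP : ∀ u l, P u → B u l ≠ 0 → P l) {k : Fin n} (hk : P k) (a : Fin n) : P a := by
  rcases eq_or_ne a k with rfl | hak
  · exact hk
  have hpath := hsc a k hak
  clear hak
  induction hpath using Relation.TransGen.head_induction_on with
  | single h => exact hP _ _ hk h
  | head h _ ih => exact hP _ _ ih h

theorem lapOf_mulVec_eq_zero_iff (hB : ∀ i j, 0 ≤ B i j) (hsc : StronglyConnected B)
    {x : Fin n → ℝ} : lapOf B *ᵥ x = 0 ↔ ∀ a b, x a = x b := by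
  constructor
  · intro hx a
    obtain ⟨k, -, hk⟩ := Finset.exists_max_image Finset.univ x ⟨a, Finset.mem_univ a⟩
    have hmax : ∀ a, x a = x k := hsc.forall_of_closed (P := fun u => x u = x k)
      (fun u l hu hl => (eq_of_forall_le_of_lapOf_mulVec_nonpos hB
        (fun j => hu ▸ hk j (Finset.mem_univ j)) (by rw [hx]; rfl) hl).trans hu) rfl
    exact fun b => (hmax a).trans (hmax b).symm
  · intro hx
    funext u
    rw [lapOf_mulVec_apply_of_nonneg hB]
    exact Finset.sum_eq_zero fun j _ => by rw [hx u j, sub_self, mul_zero]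

theorem eq_zero_of_smul_add_lapOf_mulVec_eq_zero (hB : ∀ i j, 0 ≤ B i j)
    (hsc : StronglyConnected B) {i : Fin n} {s : ℝ} (hs : 0 ≤ s) {x : Fin n → ℝ}
    (hxi : x i = 0) (hx : ∀ u, u ≠ i → s * x u + (lapOf B *ᵥ x) u = 0) : x = 0 := by
  -- `|x|` is `L`-subharmonic at the maxima of `|x|` other than `i`, so these maxima spread
  -- to all predecessors and would reach `i`, where `x` vanishes.
  obtain ⟨k, -, hk⟩ := Finset.exists_max_image Finset.univ (|x ·|) ⟨i, Finset.mem_univ i⟩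
  have habs_le : ∀ u, |x u| = |x k| → u ≠ i → (lapOf B *ᵥ (|x ·|)) u ≤ 0 := by
    intro u hu hui
    have hsum : ∑ j, B u j * x j = (s + inDeg B u) * x u := by
      linarith [hx u hui, lapOf_mulVec_apply B x u]
    have hdeg : 0 ≤ s + inDeg B u := add_nonneg hs (Finset.sum_nonneg fun j _ => abs_nonneg _)
    calc (lapOf B *ᵥ (|x ·|)) u = inDeg B u * |x u| - ∑ j, B u j * |x j| :=
          lapOf_mulVec_apply B _ u
      _ ≤ inDeg B u * |x u| - |∑ j, B u j * x j| := by
          gcongr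
          exact (Finset.abs_sum_le_sum_abs _ _).trans_eq
            (Finset.sum_congr rfl fun j _ => by rw [abs_mul, abs_of_nonneg (hB u j)])
      _ = -s * |x u| := by rw [hsum, abs_mul, abs_of_nonneg hdeg]; ring
      _ ≤ 0 := by nlinarith [abs_nonneg (x u)]
  by_contra hx0
  have hpos : 0 < |x k| := by
    obtain ⟨l, hl⟩ := Function.ne_iff.mp hx0
    exact (abs_pos.mpr hl).trans_le (hk l (Finset.mem_univ l))
  have hne : ∀ u, |x u| = |x k| → u ≠ i := fun u hu hui => by
    rw [hui, hxi, abs_zero] at hu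
    exact hpos.ne hu
  have hmax := hsc.forall_of_closed (P := fun u => |x u| = |x k|)
    (fun u l hu hl => (eq_of_forall_le_of_lapOf_mulVec_nonpos hB
      (fun j => hu ▸ hk j (Finset.mem_univ j)) (habs_le u hu (hne u hu)) hl).trans hu) rfl
  exact hne i (hmax i) rfl

theorem minorDet_pos (hB : ∀ i j, 0 ≤ B i j) (hsc : StronglyConnected B) (i : Fin n) :
    0 < minorDet B i := by
  rw [minorDet, lapBar_of_nonneg hB]
  refine det_pos_of_det_smul_one_add_ne_zero _ fun s hs hdet => ?_
  obtain ⟨v, hv0, hv⟩ := exists_mulVec_eq_zero_iff.mpr hdet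
  set x : Fin n → ℝ := fun j => if h : j = i then 0 else v ⟨j, h⟩
  have hxi : x i = 0 := dif_pos rfl
  have hxv : ∀ j : {j // j ≠ i}, x j = v j := fun j => dif_neg j.2
  have hx : ∀ u, u ≠ i → s * x u + (lapOf B *ᵥ x) u = 0 := by
    intro u hu
    have hrow := congrFun hv ⟨u, hu⟩
    rw [Pi.zero_apply, add_mulVec, smul_mulVec, one_mulVec] at hrow
    rw [hxv ⟨u, hu⟩, ← hrow]
    simp only [Pi.add_apply, Pi.smul_apply, smul_eq_mul, add_right_inj, mulVec, dotProduct,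
      Fintype.sum_eq_add_sum_subtype_ne _ i, hxi, mul_zero, zero_add]
    exact Finset.sum_congr rfl fun j _ => by rw [hxv j]; rfl
  have hx0 := eq_zero_of_smul_add_lapOf_mulVec_eq_zero hB hsc hs hxi hx
  exact hv0 (funext fun j => (hxv j).symm.trans (congrFun hx0 j))

theorem minorDet_vecMul_lapOf (hB : ∀ i j, 0 ≤ B i j) (hsc : StronglyConnected B) :
    minorDet B ᵥ* lapOf B = 0 := by
  funext j
  set L := lapOf B
  have hdet : L.det = 0 := exists_mulVec_eq_zero_iff.mp
    ⟨fun _ => 1, Function.ne_iff.mpr ⟨j, one_ne_zero⟩,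
      (lapOf_mulVec_eq_zero_iff hB hsc).mpr fun _ _ => rfl⟩
  have hcol : ∀ a b, L.adjugate a b = L.adjugate b b := fun a b =>
    (lapOf_mulVec_eq_zero_iff hB hsc (x := fun k => L.adjugate k b)).mp (by
      funext c
      simpa [hdet, mul_apply, mulVec, dotProduct] using
        congrFun (congrFun (mul_adjugate L) c) b) a b
  have hdiag := congrFun (congrFun (adjugate_mul L) j) j
  rw [hdet, zero_smul, mul_apply] at hdiag
  calc (minorDet B ᵥ* L) j = ∑ k, L.adjugate j k * L k j := by
        show ∑ k, minorDet B k * L k j = _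
        refine Finset.sum_congr rfl fun k _ => ?_
        rw [hcol j k, adjugate_apply_self, minorDet, lapBar_of_nonneg hB]
    _ = 0 := hdiag

theorem mirrorLap_apply (B : Matrix (Fin n) (Fin n) ℝ) (a b : Fin n) :
    mirrorLap B a b = (minorDet B a * lapOf B a b + lapOf B b a * minorDet B b) / 2 := by
  simp only [mirrorLap, Wmat, Matrix.smul_apply, Matrix.add_apply, diagonal_mul, mul_diagonal,
    transpose_apply, smul_eq_mul]
  ring

theorem mirrorAdj_apply (B : Matrix (Fin n) (Fin n) ℝ) (a b : Fin n) :
    mirrorAdj B a b = (minorDet B a * B a b + B b a * minorDet B b) / 2 := by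
  simp only [mirrorAdj, Wmat, Matrix.smul_apply, Matrix.add_apply, diagonal_mul, mul_diagonal,
    transpose_apply, smul_eq_mul]
  ring

theorem mirrorAdj_nonneg (hB : ∀ i j, 0 ≤ B i j) (hsc : StronglyConnected B) (a b : Fin n) :
    0 ≤ mirrorAdj B a b := by
  have := (minorDet_pos hB hsc a).le
  have := (minorDet_pos hB hsc b).le
  have := hB a b
  have := hB b a
  rw [mirrorAdj_apply]
  positivity

theorem inDeg_mirrorAdj (hB : ∀ i j, 0 ≤ B i j) (hsc : StronglyConnected B) (a : Fin n) :
    inDeg (mirrorAdj B) a = minorDet B a * inDeg B a := by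
  have hflow := congrFun (minorDet_vecMul_lapOf hB hsc) a
  simp only [lapOf, vecMul_sub, vecMul_diagonal, Pi.sub_apply, Pi.zero_apply,
    sub_eq_zero] at hflow
  rw [inDeg_of_nonneg (mirrorAdj_nonneg hB hsc)]
  calc ∑ b, mirrorAdj B a b
      = (minorDet B a * ∑ b, B a b + ∑ b, minorDet B b * B b a) / 2 := by
        simp only [mirrorAdj_apply, ← Finset.sum_div, Finset.sum_add_distrib, Finset.mul_sum,
          mul_comm (B _ a)]
    _ = minorDet B a * inDeg B a := by
        rw [← inDeg_of_nonneg hB]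
        change (_ + (minorDet B ᵥ* B) a) / 2 = _
        rw [← hflow]
        ring

theorem mirrorLap_eq_lapOf_mirrorAdj (hB : ∀ i j, 0 ≤ B i j) (hsc : StronglyConnected B) :
    mirrorLap B = lapOf (mirrorAdj B) := by
  ext a b
  rcases eq_or_ne a b with rfl | hab
  · simp only [mirrorLap_apply, lapOf, Matrix.sub_apply, diagonal_apply_eq,
      inDeg_mirrorAdj hB hsc, mirrorAdj_apply]
    ring
  · simp only [mirrorLap_apply, lapOf, Matrix.sub_apply, diagonal_apply_ne _ hab,
      diagonal_apply_ne _ hab.symm, mirrorAdj_apply]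
    ring

theorem StronglyConnected.mirrorAdj (hB : ∀ i j, 0 ≤ B i j) (hsc : StronglyConnected B) :
    StronglyConnected (mirrorAdj B) := by
  intro i j hij
  refine Relation.TransGen.mono (fun u v huv => ?_) _ _ (hsc i j hij)
  have := minorDet_pos hB hsc v
  have := (minorDet_pos hB hsc u).le
  have := (hB v u).lt_of_ne' huv
  have := hB u v
  rw [mirrorAdj_apply]
  positivity

theorem mirrorLap_mulVec_eq_zero_iff (hB : ∀ i j, 0 ≤ B i j) (hsc : StronglyConnected B)
    {x : Fin n → ℝ} : mirrorLap B *ᵥ x = 0 ↔ ∀ a b, x a = x b := by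
  rw [mirrorLap_eq_lapOf_mirrorAdj hB hsc]
  exact lapOf_mulVec_eq_zero_iff (mirrorAdj_nonneg hB hsc) (hsc.mirrorAdj hB)

end Laplacian

section Gauge

variable {n : ℕ} {σ : Fin n → ℝ}

theorem IsGauge.mul_self (hσ : IsGauge σ) (i : Fin n) : σ i * σ i = 1 := by
  rcases hσ i with h | h <;> simp [h]

theorem IsGauge.ne_zero (hσ : IsGauge σ) (i : Fin n) : σ i ≠ 0 := by
  rcases hσ i with h | h <;> simp [h]

theorem IsGauge.abs_mul_mul (hσ : IsGauge σ) (a : ℝ) (i j : Fin n) :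
    |σ i * a * σ j| = |a| := by
  rcases hσ i with h | h <;> rcases hσ j with h' | h' <;> simp [h, h']

theorem diagonal_mul_mul_diagonal_apply (σ : Fin n → ℝ) (A : Matrix (Fin n) (Fin n) ℝ)
    (i j : Fin n) :
    (diagonal σ * A * diagonal σ) i j = σ i * A i j * σ j := by
  rw [mul_diagonal, diagonal_mul]

theorem inDeg_gauge (hσ : IsGauge σ) (A : Matrix (Fin n) (Fin n) ℝ) :
    inDeg (diagonal σ * A * diagonal σ) = inDeg A := by
  funext i
  simp only [inDeg, diagonal_mul_mul_diagonal_apply, hσ.abs_mul_mul]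

theorem lapOf_gauge (hσ : IsGauge σ) (A : Matrix (Fin n) (Fin n) ℝ) :
    lapOf (diagonal σ * A * diagonal σ) = diagonal σ * lapOf A * diagonal σ := by
  ext i j
  rw [diagonal_mul_mul_diagonal_apply, lapOf, lapOf, Matrix.sub_apply, Matrix.sub_apply,
    diagonal_mul_mul_diagonal_apply, inDeg_gauge hσ]
  rcases eq_or_ne i j with rfl | hij
  · simp only [diagonal_apply_eq]
    linear_combination (-inDeg A i) * hσ.mul_self i
  · simp only [diagonal_apply_ne _ hij]
    ring

theorem minorDet_gauge (hσ : IsGauge σ) (A : Matrix (Fin n) (Fin n) ℝ) :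
    minorDet (diagonal σ * A * diagonal σ) = minorDet A := by
  have hlapBar : lapBar (diagonal σ * A * diagonal σ) = lapBar A := by
    simp only [lapBar, inDeg_gauge hσ, diagonal_mul_mul_diagonal_apply, hσ.abs_mul_mul]
  funext i
  rw [minorDet, minorDet, hlapBar]

theorem mirrorLap_gauge (hσ : IsGauge σ) (A : Matrix (Fin n) (Fin n) ℝ) :
    mirrorLap (diagonal σ * A * diagonal σ) = diagonal σ * mirrorLap A * diagonal σ := by
  ext i j
  rw [mirrorLap_apply, diagonal_mul_mul_diagonal_apply, mirrorLap_apply, minorDet_gauge hσ,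
    lapOf_gauge hσ, diagonal_mul_mul_diagonal_apply, diagonal_mul_mul_diagonal_apply]
  ring

theorem StronglyConnected.gauge (hσ : IsGauge σ) {A : Matrix (Fin n) (Fin n) ℝ}
    (hsc : StronglyConnected A) : StronglyConnected (diagonal σ * A * diagonal σ) := by
  intro i j hij
  refine Relation.TransGen.mono (fun u v huv => ?_) _ _ (hsc i j hij)
  rw [diagonal_mul_mul_diagonal_apply]
  exact mul_ne_zero (mul_ne_zero (hσ.ne_zero v) huv) (hσ.ne_zero u)

theorem IsGauge.diagonal_mulVec_eq_zero_iff (hσ : IsGauge σ) {x : Fin n → ℝ} :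
    diagonal σ *ᵥ x = 0 ↔ x = 0 := by
  simp [funext_iff, mulVec_diagonal, hσ.ne_zero]

theorem IsGauge.exists_eq_smul_iff (hσ : IsGauge σ) {x : Fin n → ℝ} :
    (∃ c : ℝ, x = c • σ) ↔ ∀ a b, σ a * x a = σ b * x b := by
  constructor
  · rintro ⟨c, rfl⟩ a b
    simp only [Pi.smul_apply, smul_eq_mul]
    linear_combination c * (hσ.mul_self a - hσ.mul_self b)
  · intro hx
    rcases isEmpty_or_nonempty (Fin n) with _ | ⟨⟨a⟩⟩
    · exact ⟨0, Subsingleton.elim _ _⟩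
    refine ⟨σ a * x a, funext fun b => ?_⟩
    simp only [Pi.smul_apply, smul_eq_mul]
    linear_combination σ b * hx b a - x b * hσ.mul_self b

end Gauge

theorem balanced_iff_nullspace_span_general (n : ℕ)
    (A : Matrix (Fin n) (Fin n) ℝ)
    (hsc : StronglyConnected A) :
    StructBalanced A ↔
      ∃ σ : Fin n → ℝ, IsGauge σ ∧ (∀ i j, 0 ≤ σ i * A i j * σ j) ∧
        (∀ x : Fin n → ℝ, mirrorLap A *ᵥ x = 0 ↔ ∃ c : ℝ, x = c • σ) := by
  refine ⟨fun ⟨σ, hσ, hbal⟩ => ⟨σ, hσ, hbal, fun x => ?_⟩,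
    fun ⟨σ, hσ, hbal, _⟩ => ⟨σ, hσ, hbal⟩⟩
  set D := diagonal σ
  have hB : ∀ i j, 0 ≤ (D * A * D) i j := fun i j =>
    (diagonal_mul_mul_diagonal_apply σ A i j).symm ▸ hbal i j
  have hmulVec : mirrorLap (D * A * D) *ᵥ (D *ᵥ x) = D *ᵥ (mirrorLap A *ᵥ x) := by
    rw [mirrorLap_gauge hσ, mulVec_mulVec, Matrix.mul_assoc _ D D, diagonal_mul_diagonal,
      funext hσ.mul_self, diagonal_one, mul_one, mulVec_mulVec]
  rw [← hσ.diagonal_mulVec_eq_zero_iff, ← hmulVec,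
    mirrorLap_mulVec_eq_zero_iff hB (hsc.gauge hσ), hσ.exists_eq_smul_iff]
  simp only [D, mulVec_diagonal]

/-- `G` is structurally balanced iff the null space of `L̂` is
`span{D·1_n}` for a gauge transformation `D` with `D·A·D` nonnegative. -/
theorem balanced_iff_nullspace_span (n : ℕ) (hn : 2 ≤ n)
    (A : Matrix (Fin n) (Fin n) ℝ)
    (hdiag : ∀ i, A i i = 0) (hdigon : ∀ i j, 0 ≤ A i j * A j i)
    (hsc : StronglyConnected A) :
    StructBalanced A ↔
      ∃ σ : Fin n → ℝ, IsGauge σ ∧ (∀ i j, 0 ≤ σ i * A i j * σ j) ∧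
        (∀ x : Fin n → ℝ, mirrorLap A *ᵥ x = 0 ↔ ∃ c : ℝ, x = c • σ) :=
  balanced_iff_nullspace_span_general n A hsc
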